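/- Let (X,d,μ) be a metric measure space of non-homogeneous type and ρ₁, ρ₂ ∈ (1,∞). Then there exist positive constants c and C, depending only on ρ₁, ρ₂ and ν, such that for all balls B ⊂ S in X one has c · K̃^{(ρ₁)}_{B,S} ≤ K̃^{(ρ₂)}_{B,S} ≤ C · K̃^{(ρ₁)}_{B,S}. -/

import Mathlib

open MeasureTheory Metric ENNReal Filter

noncomputable section

/-- A metric measure space of non-homogeneous type: `(X,d,μ)` is geometrically doubling
and upper doubling with dominating function `lam`. -/
structure NonHomSpace (X : Type*) [MetricSpace X] [MeasurableSpace X]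
    (μ : MeasureTheory.Measure X) where
  lam : X → ℝ → ℝ
  Clam : ℝ
  N₀ : ℕ
  Clam_gt : 1 < Clam
  lam_pos : ∀ x r, 0 < r → 0 < lam x r
  lam_mono : ∀ x r₁ r₂, 0 < r₁ → r₁ ≤ r₂ → lam x r₁ ≤ lam x r₂
  measure_ball_le : ∀ x r, 0 < r → μ (ball x r) ≤ ENNReal.ofReal (lam x r)
  lam_half : ∀ x r, 0 < r → lam x r ≤ Clam * lam x (r / 2)
  lam_comp : ∀ x y r, 0 < r → dist x y ≤ r → lam x r ≤ Clam * lam y r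
  geom : ∀ (x : X) (r : ℝ), 0 < r → ∃ s : Finset X, s.card ≤ N₀ ∧
    ball x r ⊆ ⋃ y ∈ s, ball y (r / 2)

variable {X : Type*} [MetricSpace X] [MeasurableSpace X] [BorelSpace X]

/-- The discrete coefficient `K̃^{(ρ)}_{B,S}` for balls `B = B(cB,rB) ⊆ S` with radius `rS`. -/
def Ktilde (μ : Measure X) (lam : X → ℝ → ℝ) (ρ : ℝ) (cB : X) (rB rS : ℝ) : ℝ :=
  1 + ∑ k ∈ Finset.Icc (-(⌊Real.logb ρ 2⌋)) ⌈Real.logb ρ (rS / rB)⌉,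
      (μ (ball cB (ρ ^ k * rB))).toReal / lam cB (ρ ^ k * rB)

/-- `f` satisfies the `R̃BMO_{ρ,γ}(μ)` conditions with family of numbers `fB` and constant `C`. -/
def IsRBMOWith (μ : Measure X) (lam : X → ℝ → ℝ) (ρ γ : ℝ) (f : X → ℝ)
    (fB : X → ℝ → ℝ) (C : ℝ) : Prop :=
  (∀ c r, 0 < r →
    ∫ x in ball c r, |f x - fB c r| ∂μ ≤ C * (μ (ball c (ρ * r))).toReal) ∧
  (∀ c r c' r', 0 < r → 0 < r' → ball c r ⊆ ball c' r' →
    |fB c r - fB c' r'| ≤ C * Ktilde μ lam ρ c r r' ^ γ)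

/-- Membership in `R̃BMO_{ρ,γ}(μ)`. -/
def MemRBMO (μ : Measure X) (lam : X → ℝ → ℝ) (ρ γ : ℝ) (f : X → ℝ) : Prop :=
  ∃ C : ℝ, 0 ≤ C ∧ ∃ fB : X → ℝ → ℝ, IsRBMOWith μ lam ρ γ f fB C

/-- The `R̃BMO_{ρ,γ}(μ)` norm. -/
def rbmoNorm (μ : Measure X) (lam : X → ℝ → ℝ) (ρ γ : ℝ) (f : X → ℝ) : ℝ :=
  sInf {C : ℝ | 0 ≤ C ∧ ∃ fB : X → ℝ → ℝ, IsRBMOWith μ lam ρ γ f fB C}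

/-- A `(2,1,2)_λ`-atomic block `h` with `|h| = A`. -/
def IsAtomicBlock (μ : Measure X) (lam : X → ℝ → ℝ) (h : X → ℝ) (A : ℝ) : Prop :=
  ∃ (cB c₁ c₂ : X) (rB r₁ r₂ l₁ l₂ : ℝ) (a₁ a₂ : X → ℝ),
    0 < rB ∧ 0 < r₁ ∧ 0 < r₂ ∧
    Integrable h μ ∧
    Function.support h ⊆ ball cB rB ∧
    (∫ x, h x ∂μ) = 0 ∧
    (∀ x, h x = l₁ * a₁ x + l₂ * a₂ x) ∧
    Function.support a₁ ⊆ ball c₁ r₁ ∧ ball c₁ r₁ ⊆ ball cB rB ∧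
    Function.support a₂ ⊆ ball c₂ r₂ ∧ ball c₂ r₂ ⊆ ball cB rB ∧
    eLpNorm a₁ 2 μ ≤ ENNReal.ofReal
      ((μ (ball c₁ (2 * r₁))).toReal ^ (-(1/2 : ℝ)) * (Ktilde μ lam 2 c₁ r₁ rB)⁻¹) ∧
    eLpNorm a₂ 2 μ ≤ ENNReal.ofReal
      ((μ (ball c₂ (2 * r₂))).toReal ^ (-(1/2 : ℝ)) * (Ktilde μ lam 2 c₂ r₂ rB)⁻¹) ∧
    A = |l₁| + |l₂|

/-- Membership in the atomic Hardy space `H̃¹(μ)`. -/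
def MemH1 (μ : Measure X) (lam : X → ℝ → ℝ) (f : X → ℝ) : Prop :=
  Integrable f μ ∧
  ∃ (h : ℕ → X → ℝ) (A : ℕ → ℝ),
    (∀ i, IsAtomicBlock μ lam (h i) (A i)) ∧ Summable A ∧
    Tendsto (fun n => eLpNorm (fun x => f x - ∑ i ∈ Finset.range n, h i x) 1 μ)
      atTop (nhds 0)

/-- The `H̃¹(μ)` norm. -/
def H1Norm (μ : Measure X) (lam : X → ℝ → ℝ) (f : X → ℝ) : ℝ :=
  sInf {s : ℝ | ∃ (h : ℕ → X → ℝ) (A : ℕ → ℝ),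
    (∀ i, IsAtomicBlock μ lam (h i) (A i)) ∧ Summable A ∧
    Tendsto (fun n => eLpNorm (fun x => f x - ∑ i ∈ Finset.range n, h i x) 1 μ)
      atTop (nhds 0) ∧ s = ∑' i, A i}

/-- `L^∞_b(μ)`: bounded functions with bounded support. -/
def MemLinftyB (μ : Measure X) (f : X → ℝ) : Prop :=
  MemLp f ⊤ μ ∧ Bornology.IsBounded (Function.support f)

/-- `β_ρ`. -/
def betaRho (Clam : ℝ) (N₀ : ℕ) (ρ : ℝ) : ℝ :=
  ρ ^ (3 * max (Real.logb 2 (N₀ : ℝ)) (Real.logb 2 Clam)) +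
    max (5 * ρ) 30 ^ Real.logb 2 (N₀ : ℝ) + max (3 * ρ) 30 ^ Real.logb 2 Clam

/-- The ball `B(c, α r)` is `(α,β)`-doubling. -/
def IsDoubling (μ : Measure X) (α β : ℝ) (c : X) (r : ℝ) : Prop :=
  μ (ball c (α * r)) ≤ ENNReal.ofReal β * μ (ball c r)

/-- smallest `j` with `α^j B` `(α,β)`-doubling. -/
def doublingIdx (μ : Measure X) (α β : ℝ) (c : X) (r : ℝ) : ℕ :=
  sInf {j : ℕ | IsDoubling μ α β c (α ^ j * r)}

/-- radius of `B̃^α`, the smallest `(α,β)`-doubling ball of the form `α^j B`. -/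
def tildeRad (μ : Measure X) (α β : ℝ) (c : X) (r : ℝ) : ℝ :=
  α ^ doublingIdx μ α β c r * r

/-- mean of `f` over `E`. -/
def mAvg (μ : Measure X) (E : Set X) (f : X → ℝ) : ℝ :=
  (∫ y in E, f y ∂μ) / (μ E).toReal

/-- the sharp maximal function `M^♯ f`. -/
def sharpMax (μ : Measure X) (lam : X → ℝ → ℝ) (β : ℝ) (f : X → ℝ) (x : X) : ℝ≥0∞ :=
  (⨆ (c : X) (r : ℝ) (_ : 0 < r) (_ : x ∈ ball c r),
    (∫⁻ y in ball c r,
        ENNReal.ofReal |f y - mAvg μ (ball c (tildeRad μ 6 β c r)) f| ∂μ) /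
      μ (ball c (6 * r))) +
  ⨆ (c : X) (r : ℝ) (c' : X) (r' : ℝ) (_ : 0 < r) (_ : 0 < r')
      (_ : x ∈ ball c r) (_ : ball c r ⊆ ball c' r')
      (_ : IsDoubling μ 6 β c r) (_ : IsDoubling μ 6 β c' r'),
    ENNReal.ofReal (|mAvg μ (ball c r) f - mAvg μ (ball c' r') f| /
      Ktilde μ lam 6 c r r')

/-- the non-centered doubling maximal operator `N`. -/
def NMax (μ : Measure X) (β : ℝ) (f : X → ℝ) (x : X) : ℝ≥0∞ :=
  ⨆ (c : X) (r : ℝ) (_ : 0 < r) (_ : x ∈ ball c r) (_ : IsDoubling μ 6 β c r),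
    (∫⁻ y in ball c r, ENNReal.ofReal |f y| ∂μ) / μ (ball c r)

/-- the maximal operator `M_{r,(η)}`. -/
def Mmax (μ : Measure X) (r η : ℝ) (f : X → ℝ) (x : X) : ℝ≥0∞ :=
  ⨆ (c : X) (rad : ℝ) (_ : 0 < rad) (_ : x ∈ ball c rad),
    ((∫⁻ y in ball c rad, ENNReal.ofReal (|f y| ^ r) ∂μ) / μ (ball c (η * rad))) ^ (1 / r)

/-- the weak `L^p` quasinorm of an `ℝ≥0∞`-valued function. -/
def wNorm (μ : Measure X) (p : ℝ) (g : X → ℝ≥0∞) : ℝ≥0∞ :=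
  ⨆ (t : ℝ) (_ : 0 < t), ENNReal.ofReal t * μ {x | ENNReal.ofReal t < g x} ^ (1 / p)

/-- the maximal Calderón–Zygmund operator `T_*`. -/
def Tstar (μ : Measure X) (K : X → X → ℝ) (f : X → ℝ) (x : X) : ℝ≥0∞ :=
  ⨆ (ε : ℝ) (_ : 0 < ε),
    ENNReal.ofReal |∫ y in {y | ε < dist x y}, K x y * f y ∂μ|

end

section Statement3Aux

variable {X : Type*} [MetricSpace X] [MeasurableSpace X] [BorelSpace X]

private lemma lam_iter (μ : MeasureTheory.Measure X) (H : NonHomSpace X μ) (x : X) (r : ℝ)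
    (hr : 0 < r) (m : ℕ) : H.lam x r ≤ H.Clam ^ m * H.lam x (r / 2 ^ m) := by
  have hC : (0:ℝ) < H.Clam := lt_trans one_pos H.Clam_gt
  induction m with
  | zero => simp
  | succ n ih =>
    have h2 : (0:ℝ) < r / 2 ^ n := by positivity
    calc H.lam x r ≤ H.Clam ^ n * H.lam x (r / 2 ^ n) := ih
      _ ≤ H.Clam ^ n * (H.Clam * H.lam x (r / 2 ^ n / 2)) :=
          mul_le_mul_of_nonneg_left (H.lam_half x _ h2) (by positivity)
      _ = H.Clam ^ (n + 1) * H.lam x (r / 2 ^ (n + 1)) := by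
          rw [div_div, ← pow_succ]; ring

private lemma ktilde_le (μ : MeasureTheory.Measure X) (H : NonHomSpace X μ) (ρ₁ ρ₂ : ℝ)
    (hρ₁ : 1 < ρ₁) (hρ₂ : 1 < ρ₂) :
    ∃ C : ℝ, 0 < C ∧ ∀ (cB : X) (rB rS : ℝ), 0 < rB → 0 < rS →
      Ktilde μ H.lam ρ₂ cB rB rS ≤ C * Ktilde μ H.lam ρ₁ cB rB rS := by
  have hp₁ : (0:ℝ) < ρ₁ := lt_trans one_pos hρ₁
  have hp₂ : (0:ℝ) < ρ₂ := lt_trans one_pos hρ₂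
  set c : ℝ := Real.logb ρ₁ ρ₂ with hc
  have hcpos : 0 < c := Real.logb_pos hρ₁ hρ₂
  set m : ℕ := ⌈Real.logb 2 ρ₁⌉₊ with hm
  set M : ℤ := ⌈c⌉ with hM
  set D : ℕ := ⌈1 / c⌉₊ + 1 with hD
  set Cm : ℝ := H.Clam ^ m with hCm
  have hC : (0:ℝ) < H.Clam := lt_trans one_pos H.Clam_gt
  have hCm1 : 1 ≤ Cm := one_le_pow₀ (le_of_lt H.Clam_gt)
  have hM1 : (1:ℤ) ≤ M := Int.ceil_pos.mpr hcpos
  have hMR : (1:ℝ) ≤ (M:ℝ) := by exact_mod_cast hM1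
  have hD1 : (1:ℝ) ≤ (D:ℝ) := by exact_mod_cast Nat.succ_le_succ (Nat.zero_le _)
  have hCpos : (0:ℝ) < 1 + Cm * D * ((M:ℝ) + 1) := by
    have h1 : (0:ℝ) < Cm * D := mul_pos (lt_of_lt_of_le one_pos hCm1) (lt_of_lt_of_le one_pos hD1)
    nlinarith
  refine ⟨1 + Cm * D * ((M:ℝ) + 1), hCpos, ?_⟩
  intro cB rB rS hrB hrS
  unfold Ktilde
  -- logb change of base
  have hlogb : ∀ x : ℝ, Real.logb ρ₁ x = c * Real.logb ρ₂ x := by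
    intro x
    have h1 : Real.log ρ₁ ≠ 0 := ne_of_gt (Real.log_pos hρ₁)
    have h2 : Real.log ρ₂ ≠ 0 := ne_of_gt (Real.log_pos hρ₂)
    simp only [hc, Real.logb]
    field_simp
  -- index map
  set g : ℤ → ℤ := fun k => ⌈(k:ℝ) * c⌉ with hg
  have hpow_eq : ∀ k : ℤ, ρ₂ ^ k = ρ₁ ^ ((k:ℝ) * c) := by
    intro k
    rw [mul_comm, Real.rpow_mul hp₁.le, Real.rpow_logb hp₁ (ne_of_gt hρ₁) hp₂,
      Real.rpow_intCast]
  have hle1 : ∀ k : ℤ, ρ₂ ^ k ≤ ρ₁ ^ (g k) := by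
    intro k
    rw [hpow_eq k, ← Real.rpow_intCast ρ₁ (g k)]
    exact (Real.rpow_le_rpow_left_iff hρ₁).mpr (Int.le_ceil _)
  have hle2 : ∀ k : ℤ, ρ₁ ^ (g k) ≤ ρ₁ * ρ₂ ^ k := by
    intro k
    rw [hpow_eq k, ← Real.rpow_intCast ρ₁ (g k)]
    have h1 : ((g k : ℤ) : ℝ) ≤ (k:ℝ) * c + 1 := le_of_lt (Int.ceil_lt_add_one _)
    calc ρ₁ ^ ((g k : ℤ) : ℝ) ≤ ρ₁ ^ ((k:ℝ) * c + 1) :=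
          (Real.rpow_le_rpow_left_iff hρ₁).mpr h1
      _ = ρ₁ * ρ₁ ^ ((k:ℝ) * c) := by
          rw [Real.rpow_add hp₁, Real.rpow_one]; ring
  have h2m : ρ₁ ≤ 2 ^ m := by
    calc ρ₁ = (2:ℝ) ^ Real.logb 2 ρ₁ :=
          (Real.rpow_logb two_pos (by norm_num) hp₁).symm
      _ ≤ (2:ℝ) ^ (m:ℝ) := (Real.rpow_le_rpow_left_iff one_lt_two).mpr (Nat.le_ceil _)
      _ = 2 ^ m := Real.rpow_natCast 2 m
  -- the terms
  set f : ℤ → ℝ := fun j => (μ (ball cB (ρ₁ ^ j * rB))).toReal / H.lam cB (ρ₁ ^ j * rB)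
    with hf
  set f₂ : ℤ → ℝ := fun k => (μ (ball cB (ρ₂ ^ k * rB))).toReal / H.lam cB (ρ₂ ^ k * rB)
    with hf₂
  have hf0 : ∀ j : ℤ, 0 ≤ f j := fun j =>
    div_nonneg ENNReal.toReal_nonneg (H.lam_pos _ _ (mul_pos (zpow_pos hp₁ j) hrB)).le
  have hf20 : ∀ k : ℤ, 0 ≤ f₂ k := fun k =>
    div_nonneg ENNReal.toReal_nonneg (H.lam_pos _ _ (mul_pos (zpow_pos hp₂ k) hrB)).le
  have hf1 : ∀ j : ℤ, f j ≤ 1 := by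
    intro j
    have hr : 0 < ρ₁ ^ j * rB := mul_pos (zpow_pos hp₁ j) hrB
    have hlam := H.lam_pos cB _ hr
    rw [hf]
    refine div_le_one hlam |>.mpr ?_
    have := ENNReal.toReal_mono ENNReal.ofReal_ne_top (H.measure_ball_le cB _ hr)
    rwa [ENNReal.toReal_ofReal hlam.le] at this
  -- per-term comparison
  have key : ∀ k : ℤ, f₂ k ≤ Cm * f (g k) := by
    intro k
    set r : ℝ := ρ₂ ^ k * rB with hrdef
    set r' : ℝ := ρ₁ ^ (g k) * rB with hr'def
    have hr : 0 < r := mul_pos (zpow_pos hp₂ k) hrB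
    have hr' : 0 < r' := mul_pos (zpow_pos hp₁ (g k)) hrB
    have hrr' : r ≤ r' := mul_le_mul_of_nonneg_right (hle1 k) hrB.le
    have hr'2 : r' ≤ 2 ^ m * r := by
      have h1 : r' ≤ (ρ₁ * ρ₂ ^ k) * rB := mul_le_mul_of_nonneg_right (hle2 k) hrB.le
      have h2 : (ρ₁ * ρ₂ ^ k) * rB ≤ (2 ^ m * ρ₂ ^ k) * rB :=
        mul_le_mul_of_nonneg_right
          (mul_le_mul_of_nonneg_right h2m (zpow_pos hp₂ k).le) hrB.le
      calc r' ≤ (2 ^ m * ρ₂ ^ k) * rB := le_trans h1 h2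
        _ = 2 ^ m * r := by rw [hrdef]; ring
    have hlam_r : 0 < H.lam cB r := H.lam_pos _ _ hr
    have hlam_r' : 0 < H.lam cB r' := H.lam_pos _ _ hr'
    have hlam : H.lam cB r' ≤ Cm * H.lam cB r := by
      calc H.lam cB r' ≤ Cm * H.lam cB (r' / 2 ^ m) := lam_iter μ H cB r' hr' m
        _ ≤ Cm * H.lam cB r := by
            have hdiv : r' / 2 ^ m ≤ r := by
              rw [div_le_iff₀ (by positivity)]
              linarith [hr'2]
            exact mul_le_mul_of_nonneg_left
              (H.lam_mono cB _ _ (by positivity) hdiv) (by positivity)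
    have hμfin : μ (ball cB r') ≠ ⊤ :=
      ne_top_of_le_ne_top ENNReal.ofReal_ne_top (H.measure_ball_le cB r' hr')
    have hμ : (μ (ball cB r)).toReal ≤ (μ (ball cB r')).toReal :=
      ENNReal.toReal_mono hμfin (measure_mono (ball_subset_ball hrr'))
    have h0' : 0 ≤ (μ (ball cB r')).toReal := ENNReal.toReal_nonneg
    show (μ (ball cB r)).toReal / H.lam cB r ≤
      Cm * ((μ (ball cB r')).toReal / H.lam cB r')
    rw [mul_div_assoc', div_le_div_iff₀ hlam_r hlam_r']
    have e1 : (μ (ball cB r)).toReal * H.lam cB r' ≤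
        (μ (ball cB r')).toReal * H.lam cB r' :=
      mul_le_mul_of_nonneg_right hμ hlam_r'.le
    have e2 : (μ (ball cB r')).toReal * H.lam cB r' ≤
        (μ (ball cB r')).toReal * (Cm * H.lam cB r) :=
      mul_le_mul_of_nonneg_left hlam h0'
    nlinarith [e1, e2]
  -- index ranges
  set L₁ : ℤ := -(⌊Real.logb ρ₁ 2⌋) with hL₁
  set N₁ : ℤ := ⌈Real.logb ρ₁ (rS / rB)⌉ with hN₁
  set L₂ : ℤ := -(⌊Real.logb ρ₂ 2⌋) with hL₂
  set N₂ : ℤ := ⌈Real.logb ρ₂ (rS / rB)⌉ with hN₂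
  have himg : ∀ k ∈ Finset.Icc L₂ N₂, g k ∈ Finset.Icc L₁ (N₁ + M) := by
    intro k hk
    rw [Finset.mem_Icc] at hk ⊢
    obtain ⟨hk1, hk2⟩ := hk
    constructor
    · -- lower bound
      have hkc : ((L₂:ℤ):ℝ) ≤ (k:ℝ) := by exact_mod_cast hk1
      rw [hL₂] at hkc
      push_cast at hkc
      have hfl : (⌊Real.logb ρ₂ 2⌋ : ℝ) ≤ Real.logb ρ₂ 2 := Int.floor_le _
      have h1 : -(Real.logb ρ₁ 2) ≤ (k:ℝ) * c := by
        have h2 : -(Real.logb ρ₂ 2) ≤ (k:ℝ) := by linarith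
        have h3 := mul_le_mul_of_nonneg_right h2 hcpos.le
        rw [hlogb 2]
        linarith
      rw [hL₁, ← Int.ceil_neg, hg]
      exact Int.ceil_le_ceil h1
    · -- upper bound
      rw [hg]
      refine Int.ceil_le.mpr ?_
      have hk2' : (k:ℝ) ≤ (N₂:ℝ) := by exact_mod_cast hk2
      have hN2lt : (N₂:ℝ) < Real.logb ρ₂ (rS / rB) + 1 := Int.ceil_lt_add_one _
      have h3 : (k:ℝ) * c ≤ (Real.logb ρ₂ (rS / rB) + 1) * c :=
        mul_le_mul_of_nonneg_right (by linarith) hcpos.le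
      have h4 : (Real.logb ρ₂ (rS / rB) + 1) * c = Real.logb ρ₁ (rS / rB) + c := by
        rw [hlogb (rS / rB)]; ring
      have h5 : Real.logb ρ₁ (rS / rB) ≤ (N₁:ℝ) := Int.le_ceil _
      have h6 : c ≤ (M:ℝ) := Int.le_ceil _
      push_cast
      linarith
  -- fiber bound
  have fiber : ∀ j : ℤ, ({k ∈ Finset.Icc L₂ N₂ | g k = j}).card ≤ D := by
    intro j
    have hsub : {k ∈ Finset.Icc L₂ N₂ | g k = j} ⊆
        Finset.Icc (⌊((j:ℝ) - 1) / c⌋ + 1) ⌊(j:ℝ) / c⌋ := by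
      intro k hk
      rw [Finset.mem_filter] at hk
      obtain ⟨-, hgk⟩ := hk
      rw [hg] at hgk
      have h1 : (k:ℝ) * c ≤ (j:ℝ) := by
        have := Int.le_ceil ((k:ℝ) * c)
        rw [show ⌈(k:ℝ) * c⌉ = j from hgk] at this
        exact_mod_cast this
      have h2 : (j:ℝ) - 1 < (k:ℝ) * c := by
        have := Int.ceil_lt_add_one ((k:ℝ) * c)
        rw [show ⌈(k:ℝ) * c⌉ = j from hgk] at this
        linarith
      rw [Finset.mem_Icc]
      constructor
      · have hlt : ((j:ℝ) - 1) / c < (k:ℝ) := by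
          rw [div_lt_iff₀ hcpos]; linarith
        exact Int.floor_lt.mpr hlt
      · exact Int.le_floor.mpr ((le_div_iff₀ hcpos).mpr h1)
    have hcard := Finset.card_le_card hsub
    rw [Int.card_Icc] at hcard
    refine hcard.trans (Int.toNat_le.mpr ?_)
    -- ⌊j/c⌋ + 1 - (⌊(j-1)/c⌋ + 1) ≤ D  over ℤ
    have e1 : (⌊(j:ℝ) / c⌋ : ℝ) ≤ (j:ℝ) / c := Int.floor_le _
    have e2 : ((j:ℝ) - 1) / c - 1 < (⌊((j:ℝ) - 1) / c⌋ : ℝ) := Int.sub_one_lt_floor _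
    have e3 : 1 / c ≤ (⌈1 / c⌉₊ : ℝ) := Nat.le_ceil _
    have e4 : (j:ℝ) / c - ((j:ℝ) - 1) / c = 1 / c := by field_simp; ring
    have : ((⌊(j:ℝ) / c⌋ + 1 - (⌊((j:ℝ) - 1) / c⌋ + 1) : ℤ) : ℝ) ≤ ((D:ℤ) : ℝ) := by
      push_cast [hD]
      linarith
    exact_mod_cast this
  -- sum comparison
  have hsum : ∑ k ∈ Finset.Icc L₂ N₂, f₂ k ≤
      Cm * ((D:ℝ) * ((∑ j ∈ Finset.Icc L₁ N₁, f j) + (M:ℝ))) := by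
    have step1 : ∑ k ∈ Finset.Icc L₂ N₂, f₂ k ≤
        ∑ k ∈ Finset.Icc L₂ N₂, Cm * f (g k) :=
      Finset.sum_le_sum fun k _ => key k
    have step2 : ∑ k ∈ Finset.Icc L₂ N₂, f (g k) =
        ∑ j ∈ (Finset.Icc L₂ N₂).image g, ({k ∈ Finset.Icc L₂ N₂ | g k = j}).card • f j :=
      Finset.sum_comp f g
    have step3 : ∑ j ∈ (Finset.Icc L₂ N₂).image g,
          (({k ∈ Finset.Icc L₂ N₂ | g k = j}).card • f j) ≤
        ∑ j ∈ (Finset.Icc L₂ N₂).image g, (D:ℝ) * f j := by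
      refine Finset.sum_le_sum fun j _ => ?_
      rw [nsmul_eq_mul]
      exact mul_le_mul_of_nonneg_right (by exact_mod_cast fiber j) (hf0 j)
    have step4 : ∑ j ∈ (Finset.Icc L₂ N₂).image g, (D:ℝ) * f j ≤
        ∑ j ∈ Finset.Icc L₁ (N₁ + M), (D:ℝ) * f j := by
      refine Finset.sum_le_sum_of_subset_of_nonneg ?_ fun j _ _ =>
        mul_nonneg (by positivity) (hf0 j)
      exact Finset.image_subset_iff.mpr himg
    have hdisj : Disjoint (Finset.Icc L₁ N₁) (Finset.Ioc N₁ (N₁ + M)) := by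
      rw [Finset.disjoint_left]
      intro j hj1 hj2
      rw [Finset.mem_Icc] at hj1
      rw [Finset.mem_Ioc] at hj2
      omega
    have hsplit : Finset.Icc L₁ (N₁ + M) ⊆
        Finset.Icc L₁ N₁ ∪ Finset.Ioc N₁ (N₁ + M) := by
      intro j hj
      rw [Finset.mem_Icc] at hj
      rw [Finset.mem_union, Finset.mem_Icc, Finset.mem_Ioc]
      omega
    have step5 : ∑ j ∈ Finset.Icc L₁ (N₁ + M), f j ≤
        (∑ j ∈ Finset.Icc L₁ N₁, f j) + (M:ℝ) := by
      have h5a : ∑ j ∈ Finset.Icc L₁ (N₁ + M), f j ≤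
          ∑ j ∈ Finset.Icc L₁ N₁ ∪ Finset.Ioc N₁ (N₁ + M), f j :=
        Finset.sum_le_sum_of_subset_of_nonneg hsplit fun j _ _ => hf0 j
      rw [Finset.sum_union hdisj] at h5a
      have h5b : ∑ j ∈ Finset.Ioc N₁ (N₁ + M), f j ≤ (M:ℝ) := by
        have := Finset.sum_le_card_nsmul (Finset.Ioc N₁ (N₁ + M)) f 1
          (fun j _ => hf1 j)
        rw [Int.card_Ioc] at this
        refine this.trans ?_
        rw [nsmul_eq_mul, mul_one]
        have h7 : ((N₁ + M - N₁).toNat : ℤ) = M := by omega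
        exact le_of_eq (by exact_mod_cast h7)
      linarith
    calc ∑ k ∈ Finset.Icc L₂ N₂, f₂ k
        ≤ ∑ k ∈ Finset.Icc L₂ N₂, Cm * f (g k) := step1
      _ = Cm * ∑ k ∈ Finset.Icc L₂ N₂, f (g k) := by rw [Finset.mul_sum]
      _ = Cm * ∑ j ∈ (Finset.Icc L₂ N₂).image g,
            ({k ∈ Finset.Icc L₂ N₂ | g k = j}).card • f j := by rw [step2]
      _ ≤ Cm * ∑ j ∈ Finset.Icc L₁ (N₁ + M), (D:ℝ) * f j := by
          refine mul_le_mul_of_nonneg_left (le_trans step3 step4) (by positivity)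
      _ = Cm * ((D:ℝ) * ∑ j ∈ Finset.Icc L₁ (N₁ + M), f j) := by
          rw [← Finset.mul_sum]
      _ ≤ Cm * ((D:ℝ) * ((∑ j ∈ Finset.Icc L₁ N₁, f j) + (M:ℝ))) := by
          refine mul_le_mul_of_nonneg_left
            (mul_le_mul_of_nonneg_left step5 (by positivity)) (by positivity)
  -- conclude
  have hS₁0 : 0 ≤ ∑ j ∈ Finset.Icc L₁ N₁, f j := Finset.sum_nonneg fun j _ => hf0 j
  set S₁ : ℝ := ∑ j ∈ Finset.Icc L₁ N₁, f j with hS₁def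
  set S₂ : ℝ := ∑ k ∈ Finset.Icc L₂ N₂, f₂ k with hS₂def
  have hCD : (0:ℝ) ≤ Cm * (D:ℝ) := by positivity
  have hM0 : (0:ℝ) ≤ (M:ℝ) := by linarith
  have hp1 : (0:ℝ) ≤ Cm * (D:ℝ) * (M:ℝ) * S₁ :=
    mul_nonneg (mul_nonneg hCD hM0) hS₁0
  nlinarith [hsum, hS₁0, hCD, hp1]

end Statement3Aux

/-- equivalence of the discrete coefficients for different `ρ`. -/
theorem statement3 (X : Type*) [MetricSpace X] [MeasurableSpace X] [BorelSpace X]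
    (μ : MeasureTheory.Measure X) (H : NonHomSpace X μ) (ρ₁ ρ₂ : ℝ)
    (hρ₁ : 1 < ρ₁) (hρ₂ : 1 < ρ₂) :
    ∃ c C : ℝ, 0 < c ∧ 0 < C ∧
      ∀ (cB cS : X) (rB rS : ℝ), 0 < rB → 0 < rS →
        Metric.ball cB rB ⊆ Metric.ball cS rS →
        c * Ktilde μ H.lam ρ₁ cB rB rS ≤ Ktilde μ H.lam ρ₂ cB rB rS ∧
        Ktilde μ H.lam ρ₂ cB rB rS ≤ C * Ktilde μ H.lam ρ₁ cB rB rS := by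
  obtain ⟨C, hC, h12⟩ := ktilde_le μ H ρ₁ ρ₂ hρ₁ hρ₂
  obtain ⟨C', hC', h21⟩ := ktilde_le μ H ρ₂ ρ₁ hρ₂ hρ₁
  refine ⟨1 / C', C, by positivity, hC, ?_⟩
  intro cB cS rB rS hrB hrS _
  refine ⟨?_, h12 cB rB rS hrB hrS⟩
  have h := h21 cB rB rS hrB hrS
  rw [div_mul_eq_mul_div, div_le_iff₀ hC']
  linarith
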